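/- In two-way r-bootstrap percolation on T_L^d, the minimum size of a b-eternal set is exactly 2^{r-1}: there exists a set of 2^{r-1} nodes (the even-part of an r-dimensional hyper-square) such that if they are all black in some configuration then black nodes exist in all future configurations, and no set of fewer than 2^{r-1} nodes has this property. -/

import Mathlib

open scoped Classical ENNReal
open MeasureTheory Filter

/-- Vertices of the `d`-dimensional torus with side length `L`. -/
abbrev TorusV (d L : ℕ) := Fin d → ZMod L

/-- The `d`-dimensional torus graph `T_L^d`: two nodes are adjacent iff they differ
by `±1 (mod L)` in exactly one coordinate. -/
def torusGraph (d L : ℕ) : SimpleGraph (TorusV d L) where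
  Adj v u := v ≠ u ∧ ∃ j, (u j = v j + 1 ∨ u j = v j - 1) ∧ ∀ k, k ≠ j → u k = v k
  symm := by
    refine ⟨?_⟩
    rintro v u ⟨hne, j, hj, hk⟩
    refine ⟨hne.symm, j, ?_, fun k hkj => (hk k hkj).symm⟩
    rcases hj with h | h
    · right; rw [h]; ring
    · left; rw [h]; ring
  loopless := ⟨by rintro v ⟨hne, -⟩; exact hne rfl⟩

/-- One round of two-way `r`-bootstrap percolation on a finite graph:
a node is black in the next round iff it has at least `r` black neighbors. -/
noncomputable def gStep {V : Type*} [Fintype V] (G : SimpleGraph V) (r : ℕ)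
    (C : V → Bool) : V → Bool :=
  fun v => decide (r ≤ (Finset.univ.filter (fun u => G.Adj v u ∧ C u = true)).card)

/-- One round of (ordinary) `r`-bootstrap percolation: black nodes stay black, and a white
node becomes black iff it has at least `r` black neighbors. -/
noncomputable def bpStep {V : Type*} [Fintype V] (G : SimpleGraph V) (r : ℕ)
    (C : V → Bool) : V → Bool :=
  fun v => C v || decide (r ≤ (Finset.univ.filter (fun u => G.Adj v u ∧ C u = true)).card)

/-- One round of the majority model: each node adopts the most frequent color among its
neighbors, keeping its own color in case of a tie. -/
noncomputable def majStep {V : Type*} [Fintype V] (G : SimpleGraph V)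
    (C : V → Bool) : V → Bool :=
  fun v =>
    let b := (Finset.univ.filter (fun u => G.Adj v u ∧ C u = true)).card
    let w := (Finset.univ.filter (fun u => G.Adj v u ∧ C u = false)).card
    if w < b then true else if b < w then false else C v

/-- `S` is an `(r,c)`-robust set in two-way `r`-BP: whenever all nodes of `S` have color `c`,
they keep color `c` in all subsequent configurations. (`true` = black, `false` = white.) -/
noncomputable def isRobust {V : Type*} [Fintype V] (G : SimpleGraph V) (r : ℕ) (c : Bool)
    (S : Finset V) : Prop :=
  ∀ C : V → Bool, (∀ v ∈ S, C v = c) → ∀ t, ∀ v ∈ S, (gStep G r)^[t] C v = c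

/-- `S` is a b-eternal set in two-way `r`-BP: whenever all nodes of `S` are black, every
subsequent configuration contains at least one black node. -/
noncomputable def isBEternal {V : Type*} [Fintype V] (G : SimpleGraph V) (r : ℕ)
    (S : Finset V) : Prop :=
  ∀ C : V → Bool, (∀ v ∈ S, C v = true) → ∀ t, ∃ v, (gStep G r)^[t] C v = true

/-- The node of a hyper-square at start `i` obtained by incrementing the coordinates in `S`. -/
def hsNode {d L : ℕ} (i : TorusV d L) (S : Finset (Fin d)) : TorusV d L :=
  fun j => if j ∈ S then i j + 1 else i j

/-- The hyper-square with starting node `i` and coordinate set `J` (an `J.card`-dimensional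
hyper-square). -/
noncomputable def hyperSquare {d L : ℕ} (i : TorusV d L) (J : Finset (Fin d)) :
    Finset (TorusV d L) :=
  J.powerset.image (hsNode i)

/-- The even-part of the hyper-square: nodes differing from the start in an even number of
coordinates. -/
noncomputable def evenPart {d L : ℕ} (i : TorusV d L) (J : Finset (Fin d)) :
    Finset (TorusV d L) :=
  (J.powerset.filter (fun S => Even S.card)).image (hsNode i)

/-- The odd-part of the hyper-square: nodes differing from the start in an odd number of
coordinates. -/
noncomputable def oddPart {d L : ℕ} (i : TorusV d L) (J : Finset (Fin d)) :
    Finset (TorusV d L) :=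
  (J.powerset.filter (fun S => Odd S.card)).image (hsNode i)

/-- The hyper-rectangle of size `l 0 × ⋯ × l (d-1)` starting at node `i`. -/
noncomputable def hyperRect {d L : ℕ} [NeZero L] (i : TorusV d L) (l : Fin d → ℕ) :
    Finset (TorusV d L) :=
  Finset.univ.filter (fun v => ∀ j, ∃ m : ℕ, m ≤ l j ∧ v j = i j + (m : ZMod L))

/-- The parity of a hyper-square of the tiling: parity of the sum of the last `d - r`
coordinates of its starting node. -/
def tpar (d L r : ℕ) (i : TorusV d L) : ℕ :=
  (∑ j ∈ Finset.univ.filter (fun j : Fin d => r ≤ (j : ℕ)), (i j).val) % 2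

/-- A hyper-square of the tiling (start `i`, coordinate set = first `r` coordinates) is
occupied: its even-part is fully black if its parity is even, and its odd-part is fully
black if its parity is odd. -/
noncomputable def occupiedHS (d L r : ℕ) (i : TorusV d L) (C : TorusV d L → Bool) : Prop :=
  if tpar d L r i = 0 then
    ∀ v ∈ evenPart i (Finset.univ.filter (fun j : Fin d => (j : ℕ) < r)), C v = true
  else
    ∀ v ∈ oddPart i (Finset.univ.filter (fun j : Fin d => (j : ℕ) < r)), C v = true

/-- The Bernoulli measure on `Bool` with success (black) probability `p` (clamped to `1`). -/
noncomputable def bernoulliMeasure (p : ℝ≥0∞) : Measure Bool :=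
  (PMF.bernoulli (min p 1).toNNReal (by simpa using ENNReal.toNNReal_mono ENNReal.one_ne_top (min_le_right p 1))).toMeasure

/-- The product measure on configurations: each node is independently black with
probability `p`. -/
noncomputable def productMeasure (V : Type*) [Fintype V] (p : ℝ≥0∞) :
    Measure (V → Bool) :=
  Measure.pi (fun _ : V => bernoulliMeasure p)

/-!
If the even part of an `r`-dimensional hyper-square is black, every node of the odd part has its
`r` neighbours in the square black, and conversely; so the two parts take turns being entirely
black and black nodes never die out.

Conversely, if some node `v` is black at time `n`, the black sets `Y j` at times `n - j` form a
chain in which every node of `Y j` has `r` neighbours in `Y (j + 1)`. For `n < r` we get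
`2 ^ n ≤ #(Y n)` by induction: choose a coordinate `a` in which `v` differs from one of its black
predecessors and cut the chain, restricted to the ball around `v` (which does not wrap around the
torus since `L` is large), at a value of the `a`-th coordinate separating the two. A torus node
has only one neighbour on each side of it in direction `a`, so both halves are chains with
`r - 1` in place of `r`, each ending in at least `2 ^ (n - 1)` nodes. With `n = r - 1` and the
initial black set `S`, this gives `2 ^ (r - 1) ≤ #S`.
-/

open Finset
open scoped symmDiff

section Parity

variable {α : Type*}

lemma even_card_symmDiff_singleton_iff [DecidableEq α] (S : Finset α) (a : α) :
    Even #(S ∆ {a}) ↔ ¬ Even #S := by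
  by_cases h : a ∈ S
  · have hS : S ∆ {a} = S.erase a := by
      ext; simp only [mem_symmDiff, mem_singleton, mem_erase]; grind
    rw [hS, ← card_erase_add_one h, Nat.even_add_one, not_not]
  · have hS : S ∆ {a} = insert a S := by
      ext; simp only [mem_symmDiff, mem_singleton, mem_insert]; grind
    rw [hS, card_insert_of_notMem h, Nat.even_add_one]

lemma card_powerset_filter_even {J : Finset α} (hJ : J.Nonempty) :
    #{S ∈ J.powerset | Even #S} = 2 ^ (#J - 1) := by
  have hdiff : (#{S ∈ J.powerset | Even #S} : ℤ) - #{S ∈ J.powerset | ¬ Even #S} = 0 := by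
    rw [← sum_powerset_neg_one_pow_card_of_nonempty hJ]
    simp only [neg_one_pow_eq_ite, sum_ite, sum_const, nsmul_eq_mul, mul_one, mul_neg]
    ring
  have hsum := card_filter_add_card_filter_not (s := J.powerset) (fun S => Even #S)
  rw [card_powerset, ← Nat.two_pow_pred_add_two_pow_pred hJ.card_pos] at hsum
  omega

end Parity

section HyperSquare

variable {d L : ℕ} [Nontrivial (ZMod L)]

lemma hsNode_injective (i : TorusV d L) : Function.Injective (hsNode i) := by
  intro S S' h
  ext j
  have hj := congrFun h j
  simp only [hsNode] at hj
  split_ifs at hj with hS hS' hS' <;> simp_all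

lemma torusGraph_adj_hsNode_symmDiff (i : TorusV d L) (S : Finset (Fin d)) (j : Fin d) :
    (torusGraph d L).Adj (hsNode i S) (hsNode i (S ∆ {j})) := by
  refine ⟨fun h => ?_, j, ?_, fun k hk => ?_⟩
  · exact singleton_ne_empty j (symmDiff_eq_left.1 (hsNode_injective i h).symm)
  · by_cases hj : j ∈ S <;> simp [hsNode, mem_symmDiff, hj]
  · simp [hsNode, mem_symmDiff, hk]

lemma card_evenPart (i : TorusV d L) {J : Finset (Fin d)} (hJ : J.Nonempty) :
    #(evenPart i J) = 2 ^ (#J - 1) := by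
  rw [evenPart, card_image_of_injective _ (hsNode_injective i), card_powerset_filter_even hJ]

lemma iterate_gStep_hsNode [NeZero L] {r : ℕ} (i : TorusV d L) {J : Finset (Fin d)} (hrJ : r ≤ #J)
    {C : TorusV d L → Bool} (hC : ∀ v ∈ evenPart i J, C v = true) (t : ℕ) :
    ∀ S ⊆ J, (Even #S ↔ Even t) → (gStep (torusGraph d L) r)^[t] C (hsNode i S) = true := by
  induction t with
  | zero =>
    intro S hSJ hS
    exact hC _ (mem_image_of_mem _ (mem_filter.2 ⟨mem_powerset.2 hSJ, hS.2 (by simp)⟩))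
  | succ t ih =>
    intro S hSJ hS
    rw [Function.iterate_succ_apply']
    unfold gStep
    rw [decide_eq_true_iff]
    have hnbrs : J.image (fun j => hsNode i (S ∆ {j})) ⊆
        ({u | (torusGraph d L).Adj (hsNode i S) u ∧ (gStep (torusGraph d L) r)^[t] C u = true} :
          Finset _) := by
      intro u hu
      obtain ⟨j, hj, rfl⟩ := mem_image.1 hu
      refine mem_filter.2 ⟨mem_univ _, torusGraph_adj_hsNode_symmDiff i S j, ih _ ?_ ?_⟩
      · exact symmDiff_le_sup.trans (union_subset hSJ (singleton_subset_iff.2 hj))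
      · rw [even_card_symmDiff_singleton_iff, hS, Nat.even_add_one, not_not]
    calc r ≤ #J := hrJ
      _ = #(J.image (fun j => hsNode i (S ∆ {j}))) := by
        rw [card_image_of_injective]
        exact (hsNode_injective i).comp ((symmDiff_right_injective S).comp singleton_injective)
      _ ≤ _ := card_le_card hnbrs

lemma isBEternal_evenPart [NeZero L] {r : ℕ} (i : TorusV d L) {J : Finset (Fin d)} (hrJ : r ≤ #J)
    (hJ : J.Nonempty) : isBEternal (torusGraph d L) r (evenPart i J) := by
  intro C hC t
  obtain ⟨j, hj⟩ := hJ
  by_cases ht : Even t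
  · exact ⟨_, iterate_gStep_hsNode i hrJ hC t ∅ (empty_subset J) (by simpa using ht)⟩
  · exact ⟨_, iterate_gStep_hsNode i hrJ hC t {j} (singleton_subset_iff.2 hj) (by simpa using ht)⟩

end HyperSquare

section AncestryChain

variable {V : Type*} (G : SimpleGraph V)

def IsAncestryChain (r : ℕ) (Y : ℕ → Finset V) (n : ℕ) : Prop :=
  ∀ j < n, ∀ x ∈ Y j, r ≤ #{u ∈ Y (j + 1) | G.Adj x u}

lemma isAncestryChain_iterate_gStep [Fintype V] (r : ℕ) (C : V → Bool) (n : ℕ) :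
    IsAncestryChain G r (fun j => {x | (gStep G r)^[n - j] C x = true}) n := by
  intro j hj x hx
  rw [mem_filter, show n - j = n - (j + 1) + 1 by omega, Function.iterate_succ_apply'] at hx
  unfold gStep at hx
  refine (decide_eq_true_iff.1 hx.2).trans (card_le_card fun u hu => ?_)
  simp only [mem_filter, mem_univ, true_and] at hu ⊢
  exact ⟨hu.2, hu.1⟩

variable {G}

lemma IsAncestryChain.tail {r n : ℕ} {Y : ℕ → Finset V} (hY : IsAncestryChain G r Y (n + 1)) :
    IsAncestryChain G r (fun j => Y (j + 1)) n :=
  fun j hj => hY (j + 1) (by omega)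

lemma IsAncestryChain.nonempty_succ {r n j : ℕ} {Y : ℕ → Finset V}
    (hY : IsAncestryChain G r Y n) (hr : 1 ≤ r) (hj : j < n) {x : V} (hx : x ∈ Y j) :
    (Y (j + 1)).Nonempty := by
  obtain ⟨u, hu⟩ := card_pos.1 (lt_of_lt_of_le hr (hY j hj x hx))
  exact ⟨u, (mem_filter.1 hu).1⟩

lemma IsAncestryChain.filter {r k n : ℕ} {Y : ℕ → Finset V} (hY : IsAncestryChain G r Y n)
    (P : ℕ → V → Prop) [∀ j, DecidablePred (P j)]
    (hP : ∀ j < n, ∀ x ∈ Y j, P j x → #{u ∈ Y (j + 1) | G.Adj x u ∧ ¬ P (j + 1) u} ≤ k) :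
    IsAncestryChain G (r - k) (fun j => {x ∈ Y j | P j x}) n := by
  intro j hj x hx
  rw [mem_filter] at hx
  have hsplit := card_filter_add_card_filter_not (s := {u ∈ Y (j + 1) | G.Adj x u}) (P (j + 1))
  have hdropped := hP j hj x hx.1 hx.2
  have hall := hY j hj x hx.1
  rw [filter_filter, filter_filter] at hsplit
  calc r - k ≤ #{u ∈ Y (j + 1) | G.Adj x u ∧ P (j + 1) u} := by omega
    _ ≤ _ := card_le_card fun u hu => by
      simp only [mem_filter] at hu ⊢
      exact ⟨⟨hu.1, hu.2.2⟩, hu.2.1⟩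

end AncestryChain

section Split

variable {V : Type*} {G : SimpleGraph V} {r n : ℕ} {Y : ℕ → Finset V} {φ : V → ℤ}

lemma IsAncestryChain.filter_le (hY : IsAncestryChain G r Y n)
    (hlt : ∀ j < n, ∀ x ∈ Y j, #{u ∈ Y (j + 1) | G.Adj x u ∧ φ u < φ x} ≤ 1) (c : ℤ) :
    IsAncestryChain G (r - 1) (fun j => {x ∈ Y j | c ≤ φ x}) n :=
  hY.filter (fun _ x => c ≤ φ x) fun j hj x hx hcx =>
    (card_le_card fun u hu => by
      simp only [mem_filter] at hu ⊢; exact ⟨hu.1, hu.2.1, by omega⟩).trans (hlt j hj x hx)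

lemma IsAncestryChain.filter_lt (hY : IsAncestryChain G r Y n)
    (hgt : ∀ j < n, ∀ x ∈ Y j, #{u ∈ Y (j + 1) | G.Adj x u ∧ φ x < φ u} ≤ 1) (c : ℤ) :
    IsAncestryChain G (r - 1) (fun j => {x ∈ Y j | φ x < c}) n :=
  hY.filter (fun _ x => φ x < c) fun j hj x hx hxc =>
    (card_le_card fun u hu => by
      simp only [mem_filter] at hu ⊢; exact ⟨hu.1, hu.2.1, by omega⟩).trans (hgt j hj x hx)

lemma IsAncestryChain.exists_split (hY : IsAncestryChain G r Y (n + 1)) (hr : 2 ≤ r)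
    (hlt : ∀ j < n + 1, ∀ x ∈ Y j, #{u ∈ Y (j + 1) | G.Adj x u ∧ φ u < φ x} ≤ 1)
    (hgt : ∀ j < n + 1, ∀ x ∈ Y j, #{u ∈ Y (j + 1) | G.Adj x u ∧ φ x < φ u} ≤ 1)
    {v p : V} (hv : v ∈ Y 0) (hp : p ∈ Y 1) (hφ : φ p ≠ φ v) :
    ∃ c : ℤ,
      (IsAncestryChain G (r - 1) (fun j => {x ∈ Y (j + 1) | c ≤ φ x}) n ∧
        ({x ∈ Y 1 | c ≤ φ x} : Finset V).Nonempty) ∧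
      (IsAncestryChain G (r - 1) (fun j => {x ∈ Y (j + 1) | φ x < c}) n ∧
        ({x ∈ Y 1 | φ x < c} : Finset V).Nonempty) := by
  rcases hφ.lt_or_gt with h | h
  · refine ⟨φ v, ⟨(hY.filter_le hlt _).tail, ?_⟩, (hY.filter_lt hgt _).tail, p, by simp [hp, h]⟩
    exact (hY.filter_le hlt _).nonempty_succ (by omega) n.succ_pos (x := v) (by simp [hv])
  · refine ⟨φ p, ⟨(hY.filter_le hlt _).tail, p, by simp [hp]⟩, (hY.filter_lt hgt _).tail, ?_⟩
    exact (hY.filter_lt hgt _).nonempty_succ (by omega) n.succ_pos (x := v) (by simp [hv, h])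

end Split

section TorusLevels

variable {d L : ℕ}

def torusOffset (v x : TorusV d L) (b : Fin d) : ℤ := (x b - v b).valMinAbs

lemma torusOffset_self (v : TorusV d L) (b : Fin d) : torusOffset v v b = 0 := by
  simp [torusOffset]

lemma torusOffset_add_intCast [NeZero L] {v x u : TorusV d L} {b : Fin d} {k : ℤ}
    (hu : u b = x b + k) (h : 2 * |torusOffset v x b + k| < L) :
    torusOffset v u b = torusOffset v x b + k := by
  rw [torusOffset, ZMod.valMinAbs_spec]
  refine ⟨by push_cast [torusOffset, ZMod.coe_valMinAbs, hu]; ring, ?_⟩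
  have := neg_abs_le (torusOffset v x b + k)
  have := le_abs_self (torusOffset v x b + k)
  constructor <;> linarith

lemma torusOffset_of_adj [NeZero L] {v x u : TorusV d L} (h : (torusGraph d L).Adj x u)
    (b : Fin d) (hx : 2 * |torusOffset v x b| + 2 < L) :
    (u b = x b ∧ torusOffset v u b = torusOffset v x b) ∨
      (u b = x b + 1 ∧ torusOffset v u b = torusOffset v x b + 1) ∨
      (u b = x b - 1 ∧ torusOffset v u b = torusOffset v x b - 1) := by
  have hsmall : ∀ k : ℤ, |k| ≤ 1 → 2 * |torusOffset v x b + k| < L := fun k hk => by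
    have := abs_add_le (torusOffset v x b) k
    omega
  obtain ⟨-, c, hc, hother⟩ := h
  by_cases hbc : b = c
  · subst hbc
    rcases hc with hc | hc
    · exact .inr (.inl ⟨hc, by
        simpa using torusOffset_add_intCast (k := 1) (by simpa using hc) (hsmall 1 (by simp))⟩)
    · exact .inr (.inr ⟨hc, by
        simpa [← sub_eq_add_neg] using
          torusOffset_add_intCast (k := -1) (by simpa [← sub_eq_add_neg] using hc)
            (hsmall (-1) (by simp))⟩)
  · have hb := hother b hbc
    exact .inl ⟨hb, by simp [torusOffset, hb]⟩

lemma eq_update_of_adj {x u : TorusV d L} (h : (torusGraph d L).Adj x u) {b : Fin d}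
    (hb : u b ≠ x b) : u = Function.update x b (u b) := by
  obtain ⟨-, c, -, hother⟩ := h
  obtain rfl : b = c := by_contra fun hbc => hb (hother b hbc)
  funext k
  by_cases hk : k = b
  · subst hk; simp
  · simp [hk, hother k hk]

lemma card_adj_torusOffset_lt_le_one [NeZero L] (v x : TorusV d L) (b : Fin d)
    (hx : 2 * |torusOffset v x b| + 2 < L) (s : Finset (TorusV d L)) :
    #{u ∈ s | (torusGraph d L).Adj x u ∧ torusOffset v u b < torusOffset v x b} ≤ 1 := by
  have hdown : ∀ u ∈ ({u ∈ s | (torusGraph d L).Adj x u ∧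
      torusOffset v u b < torusOffset v x b} : Finset _), u = Function.update x b (x b - 1) := by
    intro u hu
    obtain ⟨-, hxu, hlt⟩ := mem_filter.1 hu
    rcases torusOffset_of_adj hxu b hx with ⟨-, h⟩ | ⟨-, h⟩ | ⟨hub, -⟩
    · omega
    · omega
    · rw [eq_update_of_adj hxu (b := b) (by rintro hub'; simp [torusOffset, hub'] at hlt), hub]
  exact card_le_one.2 fun u hu w hw => (hdown u hu).trans (hdown w hw).symm

lemma card_adj_torusOffset_gt_le_one [NeZero L] (v x : TorusV d L) (b : Fin d)
    (hx : 2 * |torusOffset v x b| + 2 < L) (s : Finset (TorusV d L)) :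
    #{u ∈ s | (torusGraph d L).Adj x u ∧ torusOffset v x b < torusOffset v u b} ≤ 1 := by
  have hup : ∀ u ∈ ({u ∈ s | (torusGraph d L).Adj x u ∧
      torusOffset v x b < torusOffset v u b} : Finset _), u = Function.update x b (x b + 1) := by
    intro u hu
    obtain ⟨-, hxu, hlt⟩ := mem_filter.1 hu
    rcases torusOffset_of_adj hxu b hx with ⟨-, h⟩ | ⟨hub, -⟩ | ⟨-, h⟩
    · omega
    · rw [eq_update_of_adj hxu (b := b) (by rintro hub'; simp [torusOffset, hub'] at hlt), hub]
    · omega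
  exact card_le_one.2 fun u hu w hw => (hup u hu).trans (hup w hw).symm

lemma abs_torusOffset_le_of_adj [NeZero L] {v x u : TorusV d L}
    (h : (torusGraph d L).Adj x u) (b : Fin d) (hx : 2 * |torusOffset v x b| + 2 < L) :
    |torusOffset v u b| ≤ |torusOffset v x b| + 1 := by
  rcases torusOffset_of_adj h b hx with ⟨-, h⟩ | ⟨-, h⟩ | ⟨-, h⟩ <;> rw [h]
  · linarith
  · exact (abs_add_le _ _).trans (by simp)
  · exact (abs_sub _ _).trans (by simp)

theorem two_pow_le_card_of_isAncestryChain [NeZero L] {r n : ℕ} (hnr : n < r)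
    (hnL : 2 * n < L) {Y : ℕ → Finset (TorusV d L)}
    (hY : IsAncestryChain (torusGraph d L) r Y n) (hY0 : (Y 0).Nonempty) : 2 ^ n ≤ #(Y n) := by
  induction n generalizing r Y with
  | zero => simpa using hY0.card_pos
  | succ n ih =>
    obtain ⟨v, hv⟩ := hY0
    set A : ℕ → Finset (TorusV d L) := fun j => {x ∈ Y j | ∀ b, |torusOffset v x b| ≤ j}
    have hsmall : ∀ j < n + 1, ∀ x ∈ A j, ∀ b, 2 * |torusOffset v x b| + 2 < L :=
      fun j hj x hx b => by have := (mem_filter.1 hx).2 b; omega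
    have hA : IsAncestryChain (torusGraph d L) r A (n + 1) := by
      refine Nat.sub_zero r ▸ hY.filter (k := 0) _ fun j hj x hx hxj => ?_
      refine (card_eq_zero.2 (filter_eq_empty_iff.2 fun u _ hu => hu.2 fun b => ?_)).le
      have := abs_torusOffset_le_of_adj hu.1 b (hsmall j hj x (mem_filter.2 ⟨hx, hxj⟩) b)
      have := hxj b
      push_cast
      omega
    have hvA : v ∈ A 0 := mem_filter.2 ⟨hv, by simp [torusOffset_self]⟩
    obtain ⟨p, hp⟩ := card_pos.1 (lt_of_lt_of_le (by omega) (hA 0 n.succ_pos v hvA))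
    obtain ⟨hpA, hvp⟩ := mem_filter.1 hp
    obtain ⟨a, ha⟩ : ∃ a, p a ≠ v a := by
      by_contra! h
      exact hvp.ne (funext h).symm
    obtain ⟨c, ⟨hU, hU0⟩, ⟨hD, hD0⟩⟩ := hA.exists_split (φ := fun x => torusOffset v x a)
      (by omega)
      (fun j hj x hx => card_adj_torusOffset_lt_le_one v x a (hsmall j hj x hx a) _)
      (fun j hj x hx => card_adj_torusOffset_gt_le_one v x a (hsmall j hj x hx a) _)
      hvA hpA (by simpa [torusOffset, sub_eq_zero] using ha)
    calc 2 ^ (n + 1) = 2 ^ n + 2 ^ n := by ring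
      _ ≤ #{x ∈ A (n + 1) | c ≤ torusOffset v x a} + #{x ∈ A (n + 1) | ¬ c ≤ torusOffset v x a} :=
        add_le_add (ih (by omega) (by omega) hU hU0)
          (by simpa only [not_le] using ih (by omega) (by omega) hD hD0)
      _ = #(A (n + 1)) := card_filter_add_card_filter_not _
      _ ≤ #(Y (n + 1)) := card_le_card (filter_subset _ _)

end TorusLevels

theorem stmt_8 (d r : ℕ) (hr : 2 ≤ r) (hrd : r ≤ d) :
    ∃ L0 : ℕ, ∀ (L : ℕ) [NeZero L], L0 ≤ L →
      (∃ (i : TorusV d L) (J : Finset (Fin d)), J.card = r ∧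
        (evenPart i J).card = 2 ^ (r - 1) ∧
        isBEternal (torusGraph d L) r (evenPart i J)) ∧
      (∀ S : Finset (TorusV d L), S.card < 2 ^ (r - 1) →
        ¬ isBEternal (torusGraph d L) r S) := by
  refine ⟨2 * r, fun L _ hL => ⟨?_, fun S hS hS_eternal => ?_⟩⟩
  · have : Fact (1 < L) := ⟨by omega⟩
    set J := univ.map (Fin.castLEEmb hrd)
    have hJ : #J = r := by simp [J]
    have hJ0 : J.Nonempty := card_pos.1 (by omega)
    exact ⟨0, J, hJ, hJ ▸ card_evenPart 0 hJ0, isBEternal_evenPart 0 hJ.ge hJ0⟩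
  · obtain ⟨v, hv⟩ := hS_eternal (fun x => decide (x ∈ S)) (by simp) (r - 1)
    have := two_pow_le_card_of_isAncestryChain (by omega) (by omega)
      (isAncestryChain_iterate_gStep _ r (fun x => decide (x ∈ S)) (r - 1)) ⟨v, by simpa using hv⟩
    simp only [Nat.sub_self, Function.iterate_zero, id_eq, decide_eq_true_eq, filter_mem_eq_inter,
      univ_inter] at this
    omega
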